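/- Let τ₁, τ₂, τ₃ be permutations of a finite nonempty set Γ = mov(τ₁) ∪ mov(τ₂) ∪ mov(τ₃) satisfying (T1) τ₁τ₂τ₃ = 1, (T3) each τ_i is fixed-point-free on Γ, and (T4) ⟨τ₁,τ₂,τ₃⟩ is transitive on Γ. Then z(τ₁) + z(τ₂) + z(τ₃) ≤ |Γ| + 2 and z(τ₁) + z(τ₂) + z(τ₃) ≡ |Γ| (mod 2), where z(σ) denotes the number of cycles of σ. (Equivalently, the genus g defined by Euler's formula order = size + 2 − 2g is a nonnegative integer.) -/

import Mathlib

/-- The set of points moved by a permutation. -/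
def mov (σ : Equiv.Perm ℕ) : Set ℕ := {x | σ x ≠ x}

/-- The underlying set `Γ = mov(τ₁) ∪ mov(τ₂) ∪ mov(τ₃)` of a triple of permutations. -/
def Gam (τ : Fin 3 → Equiv.Perm ℕ) : Set ℕ := mov (τ 0) ∪ mov (τ 1) ∪ mov (τ 2)

/-- A bitrade in τ-representation: a triple `[τ₁, τ₂, τ₃]` of permutations of the
finite set `Γ = mov(τ₁) ∪ mov(τ₂) ∪ mov(τ₃)` (all permutations composed left to
right) satisfying (T1) `τ₁τ₂τ₃ = 1`, (T2) any cycle of `τ_i` and any cycle of `τ_j`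
(`i < j`) move at most one common point, and (T3) each `τ_i` is fixed-point-free
on `Γ`. -/
structure IsTauRep (τ : Fin 3 → Equiv.Perm ℕ) : Prop where
  fin : (Gam τ).Finite
  t1 : ∀ x, τ 2 (τ 1 (τ 0 x)) = x
  t2 : ∀ i j : Fin 3, i < j → ∀ x y : ℕ, x ≠ y →
    ¬((τ i).SameCycle x y ∧ (τ j).SameCycle x y)
  t3 : ∀ i : Fin 3, ∀ x ∈ Gam τ, τ i x ≠ x

/-- The same-cycle setoid on the set of points moved by `σ`;
its classes are the (nontrivial) cycles of `σ`. -/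
def cycSetoidOn (σ : Equiv.Perm ℕ) : Setoid (mov σ) :=
  ⟨fun a b => σ.SameCycle a.1 b.1,
    ⟨fun a => Equiv.Perm.SameCycle.refl σ a.1,
     fun h => h.symm, fun h h' => h.trans h'⟩⟩

/-- `zc σ` is the number of cycles of `σ`. -/
noncomputable def zc (σ : Equiv.Perm ℕ) : ℕ := Nat.card (Quotient (cycSetoidOn σ))

/-- (T4): the group `⟨τ₁, τ₂, τ₃⟩` acts transitively on `Γ`. -/
def TransOn (τ : Fin 3 → Equiv.Perm ℕ) : Prop :=
  ∀ x ∈ Gam τ, ∀ y ∈ Gam τ,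
    ∃ g ∈ Subgroup.closure ({τ 0, τ 1, τ 2} : Set (Equiv.Perm ℕ)), g x = y

/-- A spherical bitrade in τ-representation: (T4) holds and the genus defined by
Euler's formula `order = size + 2 - 2g` is zero. -/
def Spherical (τ : Fin 3 → Equiv.Perm ℕ) : Prop :=
  IsTauRep τ ∧ TransOn τ ∧
    zc (τ 0) + zc (τ 1) + zc (τ 2) = Nat.card (Gam τ) + 2

/-- A bitrade in τ-representation is bicyclic if some `τ_j` has exactly two cycles. -/
def Bicyclic (τ : Fin 3 → Equiv.Perm ℕ) : Prop := ∃ j : Fin 3, zc (τ j) = 2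

/-- The inverse `Z⁻¹ = [τ₁⁻¹, τ₂⁻¹, τ₂τ₁]` of a bitrade in τ-representation
(`τ₂τ₁`, composed left to right, is `τ 0 * τ 1` in Lean's convention). -/
def ZInv (τ : Fin 3 → Equiv.Perm ℕ) : Fin 3 → Equiv.Perm ℕ :=
  ![(τ 0)⁻¹, (τ 1)⁻¹, τ 0 * τ 1]

/-- `SlideRel τ x j u τ'` says that `τ'` is the result of the slide expansion of
`τ` at the point `x ∈ Γ` in direction `j`, with new point `u ∉ Γ`.  Writing
`k = j+1`, `l = j+2`, `w = xτ_j`, `a = xτ_j⁻¹`, `b = wτ_j`, `z = xτ_k`,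
`y = wτ_l⁻¹`, the preconditions are that the `τ_j`-cycle through `x` has length at
least 3 and that the `τ_k`-cycle through `x` and the `τ_l`-cycle through `w` have
no common point; the new permutations send `a ↦ u ↦ b`, `x ↦ w ↦ x` (direction `j`),
insert `u` after `x` (direction `k`) and insert `u` between `y` and `w`
(direction `l`), agreeing with the old ones elsewhere. -/
def SlideRel (τ : Fin 3 → Equiv.Perm ℕ) (x : ℕ) (j : Fin 3) (u : ℕ)
    (τ' : Fin 3 → Equiv.Perm ℕ) : Prop :=
  x ∈ Gam τ ∧ u ∉ Gam τ ∧
  τ j x ≠ x ∧ τ j (τ j x) ≠ x ∧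
  (∀ p : ℕ, (τ (j + 1)).SameCycle x p → (τ (j + 2)).SameCycle (τ j x) p → False) ∧
  (τ' j ((τ j)⁻¹ x) = u ∧ τ' j u = τ j (τ j x) ∧
    τ' j x = τ j x ∧ τ' j (τ j x) = x ∧
    ∀ p : ℕ, p ≠ (τ j)⁻¹ x → p ≠ u → p ≠ x → p ≠ τ j x → τ' j p = τ j p) ∧
  (τ' (j + 1) x = u ∧ τ' (j + 1) u = τ (j + 1) x ∧
    ∀ p : ℕ, p ≠ x → p ≠ u → τ' (j + 1) p = τ (j + 1) p) ∧
  (τ' (j + 2) ((τ (j + 2))⁻¹ (τ j x)) = u ∧ τ' (j + 2) u = τ j x ∧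
    ∀ p : ℕ, p ≠ (τ (j + 2))⁻¹ (τ j x) → p ≠ u → τ' (j + 2) p = τ (j + 2) p)

/-!
Restrict the `τ_i` to permutations `σ_i` of `Γ`, with `n = |Γ|`. A permutation `π` is a product
of `n - z(π)` transpositions, so (T1) writes the identity as a product of `3n - Σ z(τ_i)`
transpositions which, by (T4), generate a transitive group. Multiply them in one at a time: a
transposition either splits a cycle of the running product, inside one orbit of the group
generated so far, or merges two cycles and joins at most two orbits. Hence
`n + z(l.prod) ≤ l.length + 2 · #orbits` for every list `l` of transpositions, which for our list
reads `2n ≤ 3n - Σ z(τ_i) + 2`. The parity follows from `sign π = (-1) ^ (n + z(π))`.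
-/

open Equiv Equiv.Perm Subgroup MulAction

namespace Setoid

variable {α : Type*} [Finite α] {r s : Setoid α}

theorem card_quotient_le_of_le (h : r ≤ s) : Nat.card (Quotient s) ≤ Nat.card (Quotient r) :=
  Nat.card_le_card_of_surjective (Quotient.map' id h) fun q => q.inductionOn fun x => ⟨⟦x⟧, rfl⟩

theorem card_quotient_lt_of_le (h : r ≤ s) {x y : α} (hs : s x y) (hr : ¬r x y) :
    Nat.card (Quotient s) < Nat.card (Quotient r) := by
  refine (card_quotient_le_of_le h).lt_of_ne fun heq => hr (Quotient.exact ?_)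
  have hsurj : Function.Surjective (Quotient.map' id h : Quotient r → Quotient s) :=
    fun q => q.inductionOn fun x => ⟨⟦x⟧, rfl⟩
  exact (hsurj.bijective_of_nat_card_le heq.ge).1 (Quotient.sound hs)

end Setoid

theorem Subgroup.closure_singleton_mul_le {G : Type*} [Group G] (a b : G) :
    closure {a * b} ≤ closure {a, b} :=
  (closure_le _).2 <| Set.singleton_subset_iff.2 <|
    mul_mem (subset_closure (Set.mem_insert a _)) (subset_closure (Set.mem_insert_of_mem a rfl))

namespace Equiv.Perm

variable {α : Type*}

noncomputable def numCycles (π : Perm α) : ℕ := Nat.card (Quotient (SameCycle.setoid π))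

noncomputable def numOrbits (S : Set (Perm α)) : ℕ :=
  Nat.card (Quotient (orbitRel (closure S) α))

section Orbits

variable {S T : Set (Perm α)} {x y : α}

theorem orbitRel_closure_iff : orbitRel (closure S) α x y ↔ ∃ g ∈ closure S, g y = x := by
  simp [orbitRel_apply, mem_orbit_iff, Subgroup.smul_def, Perm.smul_def]

theorem orbitRel_closure_singleton_iff {π : Perm α} :
    orbitRel (closure {π}) α x y ↔ π.SameCycle x y := by
  rw [orbitRel_closure_iff, ← zpowers_eq_closure, sameCycle_comm]
  simp [mem_zpowers_iff, SameCycle]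

theorem numCycles_eq_numOrbits_singleton (π : Perm α) : numCycles π = numOrbits {π} :=
  Nat.card_congr (Quotient.congr (Equiv.refl α) fun _ _ => orbitRel_closure_singleton_iff.symm)

theorem orbitRel_closure_mono (h : closure S ≤ closure T) :
    orbitRel (closure S) α ≤ orbitRel (closure T) α := fun _ _ hxy => by
  obtain ⟨g, hg, rfl⟩ := orbitRel_closure_iff.1 hxy
  exact orbitRel_closure_iff.2 ⟨g, h hg, rfl⟩

theorem comp_eq_of_mem_closure {β : Type*} {φ : α → β} (hS : ∀ g ∈ S, φ ∘ g = φ) {g : Perm α}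
    (hg : g ∈ closure S) : φ ∘ g = φ := by
  induction hg using closure_induction with
  | mem g hg => exact hS g hg
  | one => rfl
  | mul g h _ _ hg hh => rw [coe_mul, ← Function.comp_assoc, hg, hh]
  | inv g _ hg => rw [← hg, Function.comp_assoc, coe_inv, g.self_comp_symm, Function.comp_id, hg]

theorem apply_eq_of_orbitRel_closure {β : Type*} {φ : α → β} (hS : ∀ g ∈ S, φ ∘ g = φ)
    (h : orbitRel (closure S) α x y) : φ x = φ y := by
  obtain ⟨g, hg, rfl⟩ := orbitRel_closure_iff.1 h
  exact congrFun (comp_eq_of_mem_closure hS hg) y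

theorem orbitRel_closure_insert_swap [DecidableEq α] {u v : α}
    (h : orbitRel (closure (insert (swap u v) S)) α x y) :
    orbitRel (closure S) α x y ∨
      (orbitRel (closure S) α x u ∨ orbitRel (closure S) α x v) ∧
      (orbitRel (closure S) α y u ∨ orbitRel (closure S) α y v) := by
  set r := orbitRel (closure S) α
  have hr : ∀ {a b : α}, r a b ↔ (⟦a⟧ : Quotient r) = ⟦b⟧ := Quotient.eq.symm
  classical
  let φ : α → Quotient r := fun a => if r a v then ⟦u⟧ else ⟦a⟧
  have hφ : ∀ g ∈ insert (swap u v) S, φ ∘ g = φ := by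
    rintro g (rfl | hg) <;> funext a
    · simp only [φ, Function.comp_apply, swap_apply_def]
      split_ifs <;> simp_all
    · have hga : r (g a) a := orbitRel_closure_iff.2 ⟨g, subset_closure hg, rfl⟩
      simp only [φ, Function.comp_apply, hr, hr.1 hga]
  have := apply_eq_of_orbitRel_closure hφ h
  simp only [φ] at this
  split_ifs at this <;> simp_all

variable [Finite α]

theorem numOrbits_le_of_closure_le (h : closure S ≤ closure T) : numOrbits T ≤ numOrbits S :=
  Setoid.card_quotient_le_of_le (orbitRel_closure_mono h)

theorem numOrbits_lt_of_closure_le (h : closure S ≤ closure T)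
    (hT : orbitRel (closure T) α x y) (hS : ¬orbitRel (closure S) α x y) :
    numOrbits T < numOrbits S :=
  Setoid.card_quotient_lt_of_le (orbitRel_closure_mono h) hT hS

theorem numOrbits_le_one (h : ∀ x y : α, orbitRel (closure S) α x y) : numOrbits S ≤ 1 :=
  Finite.card_le_one_iff_subsingleton.2
    ⟨fun a b => Quotient.inductionOn₂ a b fun x y => Quotient.sound (h x y)⟩

variable [DecidableEq α] {u v : α}

theorem numOrbits_le_insert_swap (huv : orbitRel (closure S) α u v) :
    numOrbits S ≤ numOrbits (insert (swap u v) S) := by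
  refine Nat.card_le_card_of_injective (Quotient.map' id fun _ _ h => orbitRel_closure_mono
    (closure_mono (Set.subset_insert _ _)) h) fun a b => ?_
  induction a, b using Quotient.inductionOn₂ with | _ x y => ?_
  intro hxy
  apply Quotient.sound
  have hr : ∀ {a b : α}, orbitRel (closure S) α a b ↔
      (⟦a⟧ : Quotient (orbitRel (closure S) α)) = ⟦b⟧ := Quotient.eq.symm
  have := orbitRel_closure_insert_swap (Quotient.exact hxy)
  simp only [hr] at this huv ⊢
  grind

theorem numOrbits_le_insert_swap_add_one :
    numOrbits S ≤ numOrbits (insert (swap u v) S) + 1 := by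
  classical
  let r := orbitRel (closure S) α
  have hr : ∀ {a b : α}, r a b ↔ (⟦a⟧ : Quotient r) = ⟦b⟧ := Quotient.eq.symm
  let ι : Quotient r → Option (Quotient (orbitRel (closure (insert (swap u v) S)) α)) :=
    fun q => if q = ⟦v⟧ then none else some (Quotient.map' id (fun _ _ h => orbitRel_closure_mono
      (closure_mono (Set.subset_insert _ _)) h) q)
  have hι : Function.Injective ι := by
    intro a b hab
    induction a, b using Quotient.inductionOn₂ with | _ x y => ?_
    simp only [ι] at hab
    split_ifs at hab with hx hy hy
    · rw [hx, hy]
    all_goals simp only [Option.some.injEq] at hab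
    have := orbitRel_closure_insert_swap (Quotient.exact hab)
    simp only [hr] at this
    grind
  simpa [numOrbits, Finite.card_option] using Nat.card_le_card_of_injective ι hι

end Orbits

section Cycles

variable [Finite α] [DecidableEq α] {π : Perm α} {u v : α}

omit [Finite α] [DecidableEq α] in
theorem numCycles_one : numCycles (1 : Perm α) = Nat.card α :=
  (Nat.card_eq_of_bijective (Quotient.mk _)
    ⟨fun _ _ h => sameCycle_one.1 (Quotient.exact h), Quotient.mk_surjective⟩).symm

omit [DecidableEq α] in
theorem numCycles_le_card (π : Perm α) : numCycles π ≤ Nat.card α :=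
  Nat.card_le_card_of_surjective _ Quotient.mk_surjective

theorem sameCycle_swap_mul_of_not_sameCycle (h : ¬π.SameCycle u v) :
    (swap u v * π).SameCycle v u := by
  have hex : ∃ k, 0 < k ∧ (π ^ k) v = v :=
    ⟨orderOf π, orderOf_pos π, by rw [pow_orderOf_eq_one]; rfl⟩
  set k := Nat.find hex
  obtain ⟨hk, hkv⟩ : 0 < k ∧ (π ^ k) v = v := Nat.find_spec hex
  have hne_u (j : ℕ) : (π ^ j) v ≠ u := fun hj => h ⟨-j, by simp [← hj]⟩
  -- until it returns to `v`, the `π`-orbit of `v` avoids `u` and `v`, where `swap u v` is trivial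
  have hprefix : ∀ j < k, ((swap u v * π) ^ j) v = (π ^ j) v := by
    intro j
    induction j with
    | zero => simp
    | succ j ih =>
      intro hj
      rw [pow_succ', mul_apply, ih (by omega), mul_apply, ← mul_apply π, ← pow_succ']
      exact swap_apply_of_ne_of_ne (hne_u _) fun hv => Nat.find_min hex hj ⟨j.succ_pos, hv⟩
  obtain ⟨j, hj⟩ : ∃ j, k = j + 1 := ⟨k - 1, by omega⟩
  refine ⟨k, ?_⟩
  rw [zpow_natCast, hj, pow_succ', mul_apply, hprefix j (by omega), mul_apply, ← mul_apply π,
    ← pow_succ', ← hj, hkv, swap_apply_right]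

theorem numCycles_le_numCycles_swap_mul_add_one (π : Perm α) (u v : α) :
    numCycles π ≤ numCycles (swap u v * π) + 1 := by
  rw [numCycles_eq_numOrbits_singleton, numCycles_eq_numOrbits_singleton]
  have := numOrbits_le_of_closure_le (closure_singleton_mul_le (swap u v) π)
  have := numOrbits_le_insert_swap_add_one (S := {π}) (u := u) (v := v)
  omega

theorem numCycles_swap_mul_le_add_one (π : Perm α) (u v : α) :
    numCycles (swap u v * π) ≤ numCycles π + 1 := by
  simpa [swap_mul_self_mul] using numCycles_le_numCycles_swap_mul_add_one (swap u v * π) u v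

theorem numCycles_swap_mul_lt (h : ¬π.SameCycle u v) :
    numCycles (swap u v * π) < numCycles π := by
  set g := swap u v * π
  rw [numCycles_eq_numOrbits_singleton, numCycles_eq_numOrbits_singleton]
  calc numOrbits {g} ≤ numOrbits {swap u v, g} :=
        numOrbits_le_insert_swap
          (orbitRel_closure_singleton_iff.2 (sameCycle_swap_mul_of_not_sameCycle h).symm)
    _ < numOrbits {π} := by
      refine numOrbits_lt_of_closure_le (x := u) (y := v) ?_ ?_
        (mt orbitRel_closure_singleton_iff.1 h)
      · simpa [g, swap_mul_self_mul] using closure_singleton_mul_le (swap u v) g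
      · exact orbitRel_closure_iff.2
          ⟨swap u v, subset_closure (Set.mem_insert _ _), swap_apply_right u v⟩

end Cycles

section Transpositions

variable [Finite α] [DecidableEq α]

theorem card_le_numCycles_prod_add_length {l : List (Perm α)} (hl : ∀ t ∈ l, t.IsSwap) :
    Nat.card α ≤ numCycles l.prod + l.length := by
  induction l with
  | nil => simp [numCycles_one]
  | cons t l ih =>
    obtain ⟨u, v, -, rfl⟩ := hl t List.mem_cons_self
    have := numCycles_le_numCycles_swap_mul_add_one l.prod u v
    have := ih fun t ht => hl t (List.mem_cons_of_mem _ ht)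
    simp only [List.prod_cons, List.length_cons]
    omega

theorem exists_swap_list_length_add_le (π : Perm α) :
    ∃ l : List (Perm α), (∀ t ∈ l, t.IsSwap) ∧ l.prod = π ∧
      l.length + numCycles π ≤ Nat.card α := by
  induction hk : Nat.card α - numCycles π using Nat.strong_induction_on generalizing π with
  | _ k ih =>
  rcases eq_or_ne π 1 with rfl | hπ
  · exact ⟨[], by simp, rfl, by simp [numCycles_one]⟩
  obtain ⟨x, hx⟩ : ∃ x, π x ≠ x := by simpa [Equiv.ext_iff] using hπ
  set π' := swap x (π x) * π
  have hlt : numCycles π < numCycles π' := by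
    have hfix : π' x = x := by simp [π', swap_apply_right]
    have hsplit : ¬π'.SameCycle x (π x) := fun ⟨i, hi⟩ =>
      hx (by rwa [zpow_apply_eq_self_of_apply_eq_self hfix, eq_comm] at hi)
    simpa [π', swap_mul_self_mul] using numCycles_swap_mul_lt hsplit
  obtain ⟨l, hl, hprod, hlen⟩ := ih _ (by have := numCycles_le_card π'; omega) π' rfl
  refine ⟨swap x (π x) :: l, ?_, by rw [List.prod_cons, hprod, swap_mul_self_mul], ?_⟩
  · rintro t (_ | ⟨_, ht⟩)
    exacts [⟨x, π x, hx.symm, rfl⟩, hl t ht]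
  · simp only [List.length_cons]
    omega

theorem exists_swap_list_length_add_eq (π : Perm α) :
    ∃ l : List (Perm α), (∀ t ∈ l, t.IsSwap) ∧ l.prod = π ∧
      l.length + numCycles π = Nat.card α := by
  obtain ⟨l, hl, hprod, hlen⟩ := exists_swap_list_length_add_le π
  have := card_le_numCycles_prod_add_length hl
  exact ⟨l, hl, hprod, by rw [hprod] at this; omega⟩

theorem card_add_numCycles_prod_le {l : List (Perm α)} (hl : ∀ t ∈ l, t.IsSwap) :
    Nat.card α + numCycles l.prod ≤ l.length + 2 * numOrbits {g | g ∈ l} := by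
  induction l with
  | nil =>
    have : numOrbits {(1 : Perm α)} ≤ numOrbits ∅ := numOrbits_le_of_closure_le (by simp)
    simp_all [← numCycles_eq_numOrbits_singleton, numCycles_one]
    omega
  | cons t l ih =>
    obtain ⟨u, v, -, rfl⟩ := hl t List.mem_cons_self
    have ih := ih fun t ht => hl t (List.mem_cons_of_mem _ ht)
    have hset : {g | g ∈ swap u v :: l} = insert (swap u v) {g | g ∈ l} := by ext; simp
    simp only [List.prod_cons, List.length_cons, hset]
    by_cases hc : l.prod.SameCycle u v
    · have := numCycles_swap_mul_le_add_one l.prod u v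
      have hprod : closure {l.prod} ≤ closure {g | g ∈ l} := (closure_le _).2 <|
        Set.singleton_subset_iff.2 (list_prod_mem fun g hg => subset_closure hg)
      have := numOrbits_le_insert_swap
        (orbitRel_closure_mono hprod (orbitRel_closure_singleton_iff.2 hc))
      omega
    · have := numCycles_swap_mul_lt hc
      have := numOrbits_le_insert_swap_add_one (S := {g | g ∈ l}) (u := u) (v := v)
      omega

theorem card_add_numCycles_prod_add_sum_le (ps : List (Perm α)) :
    Nat.card α + numCycles ps.prod + (ps.map numCycles).sum ≤
      ps.length * Nat.card α + 2 * numOrbits {g | g ∈ ps} := by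
  choose f hswap hprod hlen using exists_swap_list_length_add_eq (α := α)
  have hLprod (qs : List (Perm α)) : (qs.flatMap f).prod = qs.prod := by
    induction qs with
    | nil => simp
    | cons p qs ih => simp [hprod, ih]
  have hLlen (qs : List (Perm α)) :
      (qs.flatMap f).length + (qs.map numCycles).sum = qs.length * Nat.card α := by
    induction qs with
    | nil => simp
    | cons p qs ih =>
      simp only [List.flatMap_cons, List.length_append, List.map_cons, List.sum_cons,
        List.length_cons]
      linarith [hlen p]
  have hL := card_add_numCycles_prod_le (l := ps.flatMap f) (by simpa using fun t p _ => hswap p t)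
  have hgen : numOrbits {g | g ∈ ps.flatMap f} ≤ numOrbits {g | g ∈ ps} :=
    numOrbits_le_of_closure_le <| (closure_le _).2 fun p hp => hprod p ▸
      list_prod_mem fun t ht => subset_closure (List.mem_flatMap.2 ⟨p, hp, ht⟩)
  rw [hLprod] at hL
  have := hLlen ps
  omega

theorem numCycles_add_numCycles_add_numCycles_le {a b c : Perm α} (habc : a * b * c = 1)
    (htrans : ∀ x y : α, orbitRel (closure {a, b, c}) α x y) :
    numCycles a + numCycles b + numCycles c ≤ Nat.card α + 2 := by
  have hbound := card_add_numCycles_prod_add_sum_le [a, b, c]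
  have hset : {g | g ∈ [a, b, c]} = ({a, b, c} : Set (Perm α)) := by ext; simp
  have horb := numOrbits_le_one (hset ▸ htrans)
  simp only [List.prod_cons, List.prod_nil, mul_one, ← mul_assoc, habc, numCycles_one,
    List.length_cons, List.length_nil, List.map_cons, List.map_nil, List.sum_cons,
    List.sum_nil] at hbound
  omega

end Transpositions

section Sign

variable [Fintype α] [DecidableEq α]

theorem sign_eq_neg_one_pow (π : Perm α) :
    sign π = (-1) ^ (Nat.card α + numCycles π) := by
  obtain ⟨l, hl, rfl, hlen⟩ := exists_swap_list_length_add_eq π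
  rw [sign_prod_list_swap hl, ← hlen, add_assoc, ← two_mul, pow_add, pow_mul, neg_one_sq, one_pow,
    mul_one]

theorem numCycles_add_numCycles_add_numCycles_mod_two {a b c : Perm α} (habc : a * b * c = 1) :
    (numCycles a + numCycles b + numCycles c) % 2 = Nat.card α % 2 := by
  have hsign : sign (a * b * c) = 1 := by rw [habc, Perm.sign_one]
  rw [Perm.sign_mul, Perm.sign_mul, sign_eq_neg_one_pow, sign_eq_neg_one_pow, sign_eq_neg_one_pow,
    ← pow_add, ← pow_add] at hsign
  obtain ⟨k, hk⟩ := (neg_one_pow_eq_one_iff_even (by decide)).1 hsign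
  omega

end Sign

theorem orbitRel_closure_of_image_ofSubtype {p : α → Prop} [DecidablePred p]
    {P : Set (Perm (Subtype p))} {x y : Subtype p}
    (h : orbitRel (closure (ofSubtype '' P)) α x y) : orbitRel (closure P) (Subtype p) x y := by
  obtain ⟨g, hg, hgy⟩ := orbitRel_closure_iff.1 h
  rw [← MonoidHom.map_closure] at hg
  obtain ⟨g, hg, rfl⟩ := hg
  exact orbitRel_closure_iff.2 ⟨g, hg, Subtype.ext (by rw [← ofSubtype_apply_coe]; exact hgy)⟩

end Equiv.Perm

theorem apply_mem_mov_iff (f : Perm ℕ) (x : ℕ) : f x ∈ mov f ↔ x ∈ mov f :=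
  f.injective.ne_iff

theorem mov_eq_gam {τ : Fin 3 → Perm ℕ} (t3 : ∀ i : Fin 3, ∀ x ∈ Gam τ, τ i x ≠ x) (i : Fin 3) :
    mov (τ i) = Gam τ :=
  Set.Subset.antisymm (by fin_cases i <;> intro x hx <;> simp_all [Gam]) (t3 i)

theorem zc_eq_numCycles_subtypePerm {f : Perm ℕ} {s : Set ℕ} (hs : mov f = s)
    (h : ∀ x, f x ∈ s ↔ x ∈ s) : zc f = numCycles (f.subtypePerm h) :=
  Nat.card_congr (Quotient.congr (Equiv.setCongr hs) fun a b =>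
    (sameCycle_subtypePerm (f := f) (x := setCongr hs a) (y := setCongr hs b)).symm)

theorem genus_nonneg_integer_general (τ : Fin 3 → Equiv.Perm ℕ)
    (hfin : (Gam τ).Finite)
    (t1 : ∀ x, τ 2 (τ 1 (τ 0 x)) = x)
    (t3 : ∀ i : Fin 3, ∀ x ∈ Gam τ, τ i x ≠ x)
    (t4 : TransOn τ) :
    zc (τ 0) + zc (τ 1) + zc (τ 2) ≤ Nat.card (Gam τ) + 2 ∧
    (zc (τ 0) + zc (τ 1) + zc (τ 2)) % 2 = Nat.card (Gam τ) % 2 := by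
  classical
  have := hfin.fintype
  have hmov := mov_eq_gam t3
  have hmem (i : Fin 3) (x : ℕ) : τ i x ∈ Gam τ ↔ x ∈ Gam τ := hmov i ▸ apply_mem_mov_iff (τ i) x
  let σ (i : Fin 3) : Perm (Gam τ) := (τ i).subtypePerm (hmem i)
  have hτ (i : Fin 3) : ofSubtype (σ i) = τ i := ofSubtype_subtypePerm _ fun x hx => hmov i ▸ hx
  have hz (i : Fin 3) : zc (τ i) = numCycles (σ i) := zc_eq_numCycles_subtypePerm (hmov i) _
  have hprod : σ 2 * σ 1 * σ 0 = 1 := ofSubtype_injective <| by ext x; simp [hτ, t1]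
  have hgen : ofSubtype '' {σ 2, σ 1, σ 0} = {τ 0, τ 1, τ 2} := by
    ext
    simp only [Set.image_insert_eq, Set.image_singleton, hτ, Set.mem_insert_iff,
      Set.mem_singleton_iff]
    tauto
  have htrans (x y : Gam τ) : orbitRel (closure {σ 2, σ 1, σ 0}) (Gam τ) x y :=
    orbitRel_closure_of_image_ofSubtype <| orbitRel_closure_iff.2 (hgen ▸ t4 y y.2 x x.2)
  have hle := numCycles_add_numCycles_add_numCycles_le hprod htrans
  have hmod := numCycles_add_numCycles_add_numCycles_mod_two hprod
  rw [hz, hz, hz]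
  omega

/-- For permutations `τ₁, τ₂, τ₃` of a finite nonempty set
`Γ = mov(τ₁) ∪ mov(τ₂) ∪ mov(τ₃)` satisfying (T1) `τ₁τ₂τ₃ = 1`, (T3) each `τ_i`
fixed-point-free on `Γ`, and (T4) `⟨τ₁, τ₂, τ₃⟩` transitive on `Γ`, the total
number of cycles satisfies `z(τ₁) + z(τ₂) + z(τ₃) ≤ |Γ| + 2` and
`z(τ₁) + z(τ₂) + z(τ₃) ≡ |Γ| (mod 2)`; equivalently, the genus `g` defined by
Euler's formula `order = size + 2 − 2g` is a nonnegative integer. -/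
theorem genus_nonneg_integer (τ : Fin 3 → Equiv.Perm ℕ)
    (hfin : (Gam τ).Finite) (hne : (Gam τ).Nonempty)
    (t1 : ∀ x, τ 2 (τ 1 (τ 0 x)) = x)
    (t3 : ∀ i : Fin 3, ∀ x ∈ Gam τ, τ i x ≠ x)
    (t4 : TransOn τ) :
    zc (τ 0) + zc (τ 1) + zc (τ 2) ≤ Nat.card (Gam τ) + 2 ∧
    (zc (τ 0) + zc (τ 1) + zc (τ 2)) % 2 = Nat.card (Gam τ) % 2 :=
  genus_nonneg_integer_general τ hfin t1 t3 t4
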